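/- arXiv:1208.3052 — 9 statements merged into one kernel-verified Lean document; each statement's English description precedes it below -/
import Mathlib

section
/- Let G be a finite group, p a prime number, C a cyclic group of order p, and ζ : C → G an injective group homomorphism whose image is contained in the center Z(G). Then the image of ζ is contained in the Frattini subgroup Φ(G) of G if and only if for every group homomorphism μ : G → C the composite μ ∘ ζ is trivial. -/
open Subgroup Pointwise

/-- A subgroup of prime index is maximal. -/
lemma isCoatom_of_prime_index {G : Type*} [Group G] {p : ℕ} (hp : p.Prime)
    {M : Subgroup G} (hM : M.index = p) : IsCoatom M := by
  constructor
  · intro h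
    rw [h, Subgroup.index_top] at hM
    exact hp.ne_one hM.symm
  · intro N hN
    have hmul := Subgroup.relIndex_mul_index hN.le
    rw [hM] at hmul
    have hdvd : N.index ∣ p := Dvd.intro_left _ hmul
    rcases (hp.eq_one_or_self_of_dvd _ hdvd) with h1 | h1
    · exact Subgroup.index_eq_one.mp h1
    · exfalso
      rw [h1] at hmul
      have hrel : M.relIndex N = 1 :=
        Nat.eq_of_mul_eq_mul_right hp.pos (by simpa using hmul)
      exact hN.not_ge (Subgroup.relIndex_eq_one.mp hrel)

/-- Let `G` be a finite group, `p` a prime, `C` a cyclic group of order `p`, and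
`ζ : C → G` an injective homomorphism whose image lies in the center of `G`.
Then `Im ζ ⊆ Φ(G)` iff every homomorphism `μ : G → C` satisfies `μ ∘ ζ = 1`. -/
theorem range_le_frattini_iff_forall_comp_trivial
    {G : Type*} [Group G] [Finite G] {p : ℕ} (hp : p.Prime)
    {C : Type*} [Group C] [IsCyclic C] (hC : Nat.card C = p)
    (ζ : C →* G) (hinj : Function.Injective ζ)
    (hcenter : ζ.range ≤ Subgroup.center G) :
    ζ.range ≤ frattini G ↔ ∀ μ : G →* C, μ.comp ζ = 1 := by
  haveI : Fact (Nat.card C).Prime := ⟨hC ▸ hp⟩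
  constructor
  · -- forward direction
    intro h μ
    rcases μ.range.eq_bot_or_eq_top_of_prime_card with hr | hr
    · ext x
      have : μ (ζ x) ∈ μ.range := ⟨ζ x, rfl⟩
      rw [hr, Subgroup.mem_bot] at this
      simpa using this
    · -- μ is surjective, so ker μ has prime index, hence is maximal
      have hidx : μ.ker.index = p := by
        rw [Subgroup.index_ker, hr, ← hC]
        exact Nat.card_congr (Subgroup.topEquiv).toEquiv
      have hcoatom := isCoatom_of_prime_index hp hidx
      have hle : ζ.range ≤ μ.ker := h.trans (frattini_le_coatom hcoatom)
      ext x
      have : ζ x ∈ μ.ker := hle ⟨x, rfl⟩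
      simpa using this
  · -- backward direction
    intro h
    rw [frattini, Order.radical, le_iInf_iff]
    intro M
    rw [le_iInf_iff]
    intro hM
    by_contra hnot
    have htop : M ⊔ ζ.range = ⊤ := hM.2 _ (left_lt_sup.mpr hnot)
    haveI hZnormal : ζ.range.Normal := by
      constructor
      intro n hn g
      have hc : n ∈ Subgroup.center G := hcenter hn
      have hgn : g * n = n * g := Subgroup.mem_center_iff.mp hc g
      have : g * n * g⁻¹ = n := by rw [hgn]; group
      rw [this]; exact hn
    -- M is normal
    haveI hMnormal : M.Normal := by
      constructor
      intro n hn g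
      have hg : g ∈ (M : Set G) * (ζ.range : Set G) := by
        rw [← Subgroup.mul_normal M ζ.range, htop]
        trivial
      obtain ⟨m, hm, z, hz, rfl⟩ := hg
      have hzc : ∀ x : G, z * x = x * z := fun x =>
        (Subgroup.mem_center_iff.mp (hcenter hz) x).symm
      have : m * z * n * (m * z)⁻¹ = m * n * m⁻¹ := by
        rw [mul_inv_rev]
        calc m * z * n * (z⁻¹ * m⁻¹) = m * (z * n * z⁻¹) * m⁻¹ := by group
          _ = m * n * m⁻¹ := by rw [hzc n]; group
      rw [this]
      exact M.mul_mem (M.mul_mem hm hn) (M.inv_mem hm)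
    set φ : C →* G ⧸ M := (QuotientGroup.mk' M).comp ζ with hφ
    have hsurj : Function.Surjective φ := by
      intro q
      obtain ⟨g, rfl⟩ := QuotientGroup.mk'_surjective M q
      have hg : g ∈ (M : Set G) * (ζ.range : Set G) := by
        rw [← Subgroup.mul_normal M ζ.range, htop]
        trivial
      obtain ⟨m, hm, z, hz, rfl⟩ := hg
      obtain ⟨c, rfl⟩ := hz
      refine ⟨c, ?_⟩
      show QuotientGroup.mk' M (ζ c) = QuotientGroup.mk' M (m * ζ c)
      rw [map_mul]
      have : QuotientGroup.mk' M m = 1 := (QuotientGroup.eq_one_iff m).mpr hm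
      rw [this, one_mul]
    rcases φ.ker.eq_bot_or_eq_top_of_prime_card with hk | hk
    · -- φ injective, hence bijective: build μ as inverse composed with quotient
      have hinj' : Function.Injective φ := (MonoidHom.ker_eq_bot_iff φ).mp hk
      let e : C ≃* G ⧸ M := MulEquiv.ofBijective φ ⟨hinj', hsurj⟩
      let μ : G →* C := e.symm.toMonoidHom.comp (QuotientGroup.mk' M)
      have hμ := h μ
      have hall : ∀ c : C, c = 1 := by
        intro c
        have h1 : μ.comp ζ c = 1 := by rw [hμ]; rfl
        have h2 : μ (ζ c) = e.symm (φ c) := rfl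
        have h3 : e.symm (φ c) = c := by
          have : φ c = e c := rfl
          rw [this, MulEquiv.symm_apply_apply]
        have : c = 1 := by
          rw [← h3, ← h2]
          exact h1
        exact this
      have : Nat.card C = 1 := by
        have : Subsingleton C := ⟨fun a b => by rw [hall a, hall b]⟩
        exact Nat.card_eq_one_iff_unique.mpr ⟨⟨fun a b => by rw [hall a, hall b]⟩, ⟨1⟩⟩
      rw [hC] at this
      exact hp.ne_one this
    · -- ker φ = ⊤ : then G⧸M is trivial, so M = ⊤, contradiction
      have : ∀ q : G ⧸ M, q = 1 := by
        intro q
        obtain ⟨c, rfl⟩ := hsurj q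
        have : c ∈ φ.ker := hk ▸ Subgroup.mem_top c
        exact this
      have hMtop : M = ⊤ := by
        rw [← Subgroup.index_eq_one, Subgroup.index]
        exact Nat.card_eq_one_iff_unique.mpr ⟨⟨fun a b => by rw [this a, this b]⟩, ⟨1⟩⟩
      exact hM.1 hMtop
end

section
/- Let G be a finite group, p a prime number, and C a cyclic group of order p. Let E be a subgroup of G × G × C such that: the projection of E to the first factor is all of G; the projection of E to the second factor is all of G; (g,1,1) ∈ E implies g = 1; (1,g,1) ∈ E implies g = 1; and (1,1,c) ∈ E implies c = 1. Then exactly one of the following holds: (i) there exist an automorphism σ of G and a homomorphism t : G → C such that E = {(σ(g), g, t(g)) : g ∈ G}; or (ii) there exist an automorphism ω of G and an injective homomorphism ζ : C → G with image contained in the center Z(G) such that E = {(ω(g)·ζ(c), g, c) : g ∈ G, c ∈ C}. -/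
/-- Dichotomy for subgroups `E ≤ G × G × C` with full projections to both `G`
factors and trivial intersections with each factor: either `E` is a twisted
diagonal `{(σ g, g, t g)}`, or `E = {(ω g · ζ c, g, c)}` with `ζ` injective and
central-valued — and exactly one of the two occurs. -/
theorem subgroup_dichotomy_twisted_diagonal_or_central
    {G : Type*} [Group G] [Finite G] {p : ℕ} (hp : p.Prime)
    {C : Type*} [Group C] [IsCyclic C] (hC : Nat.card C = p)
    (E : Subgroup (G × G × C))
    (hp1 : E.map (MonoidHom.fst G (G × C)) = ⊤)
    (hp2 : E.map ((MonoidHom.fst G C).comp (MonoidHom.snd G (G × C))) = ⊤)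
    (hk1 : ∀ g : G, (g, (1 : G), (1 : C)) ∈ E → g = 1)
    (hk2 : ∀ g : G, ((1 : G), g, (1 : C)) ∈ E → g = 1)
    (hk3 : ∀ c : C, ((1 : G), (1 : G), c) ∈ E → c = 1) :
    Xor'
      (∃ (σ : G ≃* G) (t : G →* C),
        ∀ z : G × G × C, z ∈ E ↔ ∃ g : G, z = (σ g, g, t g))
      (∃ (ω : G ≃* G) (ζ : C →* G), Function.Injective ζ ∧
        (∀ c : C, ζ c ∈ Subgroup.center G) ∧
        ∀ z : G × G × C, z ∈ E ↔ ∃ (g : G) (c : C), z = (ω g * ζ c, g, c)) := by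
  have hCfin : Finite C := Nat.finite_of_card_ne_zero (by rw [hC]; exact hp.pos.ne')
  have hCnt : Nontrivial C := by
    apply (Finite.one_lt_card_iff_nontrivial).1
    rw [hC]; exact hp.one_lt
  -- Exclusivity of the two alternatives
  have hne : ¬ ((∃ (σ : G ≃* G) (t : G →* C),
        ∀ z : G × G × C, z ∈ E ↔ ∃ g : G, z = (σ g, g, t g)) ∧
      (∃ (ω : G ≃* G) (ζ : C →* G), Function.Injective ζ ∧
        (∀ c : C, ζ c ∈ Subgroup.center G) ∧
        ∀ z : G × G × C, z ∈ E ↔ ∃ (g : G) (c : C), z = (ω g * ζ c, g, c))) := by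
    rintro ⟨⟨σ, t, h1⟩, ⟨ω, ζ, hζinj, hζc, h2⟩⟩
    obtain ⟨c, hc⟩ := exists_ne (1 : C)
    have hmem : ((ω 1 * ζ c, 1, c) : G × G × C) ∈ E := (h2 _).2 ⟨1, c, rfl⟩
    obtain ⟨g, hg⟩ := (h1 _).1 hmem
    simp only [Prod.mk.injEq] at hg
    obtain ⟨-, hg2, hg3⟩ := hg
    apply hc
    rw [hg3, ← hg2, map_one]
  -- Set up the graph description of `E` over `H := π₂₃ E`
  set f := MonoidHom.snd G (G × C) with hf
  set H := E.map f with hHdef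
  let π : E →* H := f.subgroupMap E
  have πsurj : Function.Surjective π := f.subgroupMap_surjective E
  have πinj : Function.Injective π := by
    rw [injective_iff_map_eq_one]
    rintro ⟨⟨x, g, c⟩, hz⟩ h
    have h2 : ((g, c) : G × C) = 1 := congrArg Subtype.val h
    rw [Prod.mk.injEq] at h2
    obtain ⟨rfl, rfl⟩ := h2
    have := hk1 x hz
    exact Subtype.ext (by simp [this])
  let πe : E ≃* H := MulEquiv.ofBijective π ⟨πinj, πsurj⟩
  let φ : H →* G := ((MonoidHom.fst G (G × C)).comp E.subtype).comp πe.symm.toMonoidHom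
  have hval : ∀ h : H, ((πe.symm h : E) : G × G × C) = (φ h, (h : G × C)) := by
    intro h
    have : π (πe.symm h) = h := πe.apply_symm_apply h
    have h2 : ((π (πe.symm h) : H) : G × C) = (h : G × C) := congrArg _ this
    exact Prod.ext rfl h2
  have hφmem : ∀ h : H, ((φ h, (h : G × C)) : G × G × C) ∈ E := by
    intro h
    rw [← hval h]
    exact (πe.symm h).2
  have hmem : ∀ x : G, ∀ y : G × C, (x, y) ∈ E ↔ ∃ hy : y ∈ H, φ ⟨y, hy⟩ = x := by
    intro x y
    constructor
    · intro hxy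
      have hy : y ∈ H := ⟨(x, y), hxy, rfl⟩
      refine ⟨hy, ?_⟩
      have h1 : πe.symm (π ⟨(x, y), hxy⟩) = ⟨(x, y), hxy⟩ := πe.symm_apply_apply _
      have h2 := hval (π ⟨(x, y), hxy⟩)
      rw [h1] at h2
      have h3 : π (⟨(x, y), hxy⟩ : E) = ⟨y, hy⟩ := rfl
      rw [h3] at h2
      exact (congrArg Prod.fst h2).symm
    · rintro ⟨hy, rfl⟩
      exact hφmem ⟨y, hy⟩
  -- φ is surjective (always)
  have φsurj : Function.Surjective φ := by
    intro g
    have : g ∈ E.map (MonoidHom.fst G (G × C)) := by rw [hp1]; trivial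
    obtain ⟨z, hz, hz1⟩ := this
    obtain ⟨x, y⟩ := z
    obtain ⟨hy, hxy⟩ := (hmem x y).1 hz
    exact ⟨⟨y, hy⟩, by rw [hxy]; exact hz1⟩
  -- the projection H → G to the first factor is surjective
  have qsurj : Function.Surjective ((MonoidHom.fst G C).comp H.subtype) := by
    intro g
    have : g ∈ E.map ((MonoidHom.fst G C).comp (MonoidHom.snd G (G × C))) := by
      rw [hp2]; trivial
    obtain ⟨z, hz, hz1⟩ := this
    have hy : z.2 ∈ H := ⟨z, hz, rfl⟩
    exact ⟨⟨z.2, hy⟩, hz1⟩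
  by_cases hK : φ.ker = ⊥
  -- Case A : twisted diagonal
  · have φinj : Function.Injective φ := (MonoidHom.ker_eq_bot_iff φ).1 hK
    have φbij : Function.Bijective φ := ⟨φinj, φsurj⟩
    have hcardH : Nat.card H = Nat.card G := Nat.card_eq_of_bijective φ φbij
    have qbij : Function.Bijective ((MonoidHom.fst G C).comp H.subtype) := by
      rw [Nat.bijective_iff_surjective_and_card]
      exact ⟨qsurj, hcardH⟩
    let qe : H ≃* G := MulEquiv.ofBijective _ qbij
    have key : ∀ z : G × G × C, z ∈ E ↔
        ∃ g : G, z = ((MulEquiv.ofBijective φ φbij) (qe.symm g), g,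
          ((MonoidHom.snd G C).comp H.subtype) (qe.symm g)) := by
      intro z
      obtain ⟨x, g, c⟩ := z
      constructor
      · intro hz
        obtain ⟨hy, hxy⟩ := (hmem x (g, c)).1 hz
        refine ⟨g, ?_⟩
        have hq : qe ⟨(g, c), hy⟩ = g := rfl
        have hq' : qe.symm g = ⟨(g, c), hy⟩ := qe.symm_apply_eq.2 hq.symm
        rw [hq']
        exact Prod.ext (by exact hxy.symm) rfl
      · rintro ⟨g', hg'⟩
        rw [Prod.ext_iff, Prod.ext_iff] at hg'
        obtain ⟨h1, h2, h3⟩ := hg'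
        set h := qe.symm g' with hh
        have hv : ((h : G × C)) = (g, c) := by
          have e1 : (h : G × C).1 = qe h := rfl
          have e2 : qe h = g' := qe.apply_symm_apply g'
          refine Prod.ext ?_ ?_
          · rw [e1, e2]; exact h2.symm
          · exact h3.symm
        have := hφmem h
        rw [hv] at this
        have hx : φ h = x := h1.symm
        rwa [hx] at this
    left
    constructor
    · exact ⟨qe.symm.trans (MulEquiv.ofBijective φ φbij),
        ((MonoidHom.snd G C).comp H.subtype).comp qe.symm.toMonoidHom, by
        intro z
        rw [key z]
        rfl⟩
    · intro hb
      exact hne ⟨⟨qe.symm.trans (MulEquiv.ofBijective φ φbij),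
        ((MonoidHom.snd G C).comp H.subtype).comp qe.symm.toMonoidHom, by
        intro z; rw [key z]; rfl⟩, hb⟩
  -- Case B : central extension shape
  · have hcomm : ∀ a b : C, a * b = b * a := by
      obtain ⟨gen, hgen⟩ := IsCyclic.exists_generator (α := C)
      intro a b
      obtain ⟨m, hm⟩ := hgen a
      obtain ⟨n, hn⟩ := hgen b
      rw [← hm, ← hn, ← zpow_add, ← zpow_add, add_comm]
    -- the kernel K = φ.ker is nontrivial; it maps isomorphically onto C
    set r : φ.ker →* C := (MonoidHom.snd G C).comp (H.subtype.comp φ.ker.subtype) with hr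
    have rinj : Function.Injective r := by
      rw [injective_iff_map_eq_one]
      rintro ⟨⟨⟨g, c⟩, hyH⟩, hyK⟩ h
      have hc1 : c = 1 := h
      subst hc1
      have hE : ((1 : G), ((g, 1) : G × C)) ∈ E := by
        have := hφmem ⟨(g, 1), hyH⟩
        rwa [show φ ⟨(g, 1), hyH⟩ = 1 from hyK] at this
      have hg1 : g = 1 := hk2 g hE
      subst hg1
      rfl
    have hcardK : Nat.card φ.ker = p := by
      have hdvd : Nat.card φ.ker ∣ p := by
        rw [← hC]
        exact Subgroup.card_dvd_of_injective r rinj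
      rcases hp.eq_one_or_self_of_dvd _ hdvd with h1 | h1
      · exact absurd (Subgroup.card_eq_one.1 h1) hK
      · exact h1
    have rbij : Function.Bijective r := by
      rw [Nat.bijective_iff_injective_and_card]
      exact ⟨rinj, by rw [hcardK, hC]⟩
    let re : φ.ker ≃* C := MulEquiv.ofBijective r rbij
    set ζ₀ : C → G := fun c => (((re.symm c : φ.ker) : H) : G × C).1 with hζ₀def
    have hζ₀val : ∀ c : C, ((((re.symm c : φ.ker) : H) : G × C)) = (ζ₀ c, c) :=
      fun c => Prod.ext rfl (re.apply_symm_apply c)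
    have hζ₀cent : ∀ c : C, ζ₀ c ∈ Subgroup.center G := by
      intro c
      rw [Subgroup.mem_center_iff]
      intro g
      obtain ⟨h, hh⟩ := qsurj g
      set k : φ.ker := re.symm c with hkdef
      have hkv : ((k : H) : G × C) = (ζ₀ c, c) := hζ₀val c
      set k' : φ.ker := ⟨h * (k : H) * h⁻¹, (MonoidHom.normal_ker φ).conj_mem (k : H) k.2 h⟩
        with hk'def
      have hk'v : ((k' : H) : G × C) = ((h : G × C)) * (ζ₀ c, c) * ((h : G × C))⁻¹ := by
        show (((h * (k : H) * h⁻¹ : H)) : G × C) = _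
        push_cast
        rw [hkv]
      have hrk' : r k' = c := by
        show (((k' : H) : G × C)).2 = c
        rw [hk'v]
        show (h : G × C).2 * c * ((h : G × C).2)⁻¹ = c
        rw [hcomm (h : G × C).2 c, mul_inv_cancel_right]
      have hkk : k' = k := rinj (by rw [hrk', hkdef]; exact (re.apply_symm_apply c).symm)
      have hfst : (h : G × C).1 * ζ₀ c * ((h : G × C).1)⁻¹ = ζ₀ c := by
        have := congrArg (fun z : φ.ker => (((z : H) : G × C)).1) hkk
        simp only [hk'v, hkv] at this
        exact this
      have hh' : (h : G × C).1 = g := hh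
      rw [hh'] at hfst
      calc g * ζ₀ c = g * ζ₀ c * g⁻¹ * g := by rw [inv_mul_cancel_right]
        _ = ζ₀ c * g := by rw [hfst]
    -- H is everything
    have hcardH : Nat.card H = Nat.card (G × C) := by
      rw [Subgroup.card_eq_card_quotient_mul_card_subgroup φ.ker,
        Nat.card_congr (QuotientGroup.quotientKerEquivOfSurjective φ φsurj).toEquiv,
        hcardK, Nat.card_prod, hC]
    have hHtop : H = ⊤ := Subgroup.eq_top_of_card_eq H hcardH
    have hmemH : ∀ y : G × C, y ∈ H := fun y => hHtop ▸ Subgroup.mem_top y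
    set ψ : (G × C) →* G := φ.comp ((MonoidHom.id (G × C)).codRestrict H hmemH) with hψ
    have hψval : ∀ (y : G × C) (hy : y ∈ H), ψ y = φ ⟨y, hy⟩ := fun y hy => rfl
    have hψmem : ∀ y : G × C, ((ψ y, y) : G × G × C) ∈ E := fun y => hφmem ⟨y, hmemH y⟩
    have hmemψ : ∀ (x : G) (y : G × C), (x, y) ∈ E ↔ ψ y = x := by
      intro x y
      rw [hmem x y]
      constructor
      · rintro ⟨hy, rfl⟩; rfl
      · intro h; exact ⟨hmemH y, h⟩
    set ω0 : G →* G := ψ.comp (MonoidHom.inl G C) with hω0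
    set ζ : C →* G := ψ.comp (MonoidHom.inr G C) with hζdef
    have hsplit : ∀ (g : G) (c : C), ψ (g, c) = ω0 g * ζ c := by
      intro g c
      rw [hω0, hζdef]
      simp only [MonoidHom.comp_apply, MonoidHom.inl_apply, MonoidHom.inr_apply]
      rw [← map_mul]
      congr 1
      simp
    have ω0inj : Function.Injective ω0 := by
      rw [injective_iff_map_eq_one]
      intro g h
      apply hk2
      have h2 := hψmem (g, 1)
      rwa [show ψ ((g, 1) : G × C) = ω0 g from rfl, h] at h2
    have ω0bij : Function.Bijective ω0 := by
      rw [Nat.bijective_iff_injective_and_card]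
      exact ⟨ω0inj, rfl⟩
    have ζinj : Function.Injective ζ := by
      rw [injective_iff_map_eq_one]
      intro c h
      apply hk3
      have h2 := hψmem ((1 : G), c)
      rwa [show ψ (((1 : G), c) : G × C) = ζ c from rfl, h] at h2
    have hζval : ∀ c : C, ζ c = (ω0 (ζ₀ c))⁻¹ := by
      intro c
      have h1 : ψ (ζ₀ c, c) = 1 := by
        rw [hψval _ (hmemH _)]
        have h3 : (⟨(ζ₀ c, c), hmemH _⟩ : H) = ((re.symm c : φ.ker) : H) :=
          Subtype.ext (hζ₀val c).symm
        rw [h3]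
        exact (re.symm c).2
      have h2 := hsplit (ζ₀ c) c
      rw [h1] at h2
      exact (inv_eq_of_mul_eq_one_right h2.symm).symm
    have ζcent : ∀ c : C, ζ c ∈ Subgroup.center G := by
      intro c
      rw [hζval c]
      refine (Subgroup.center G).inv_mem ?_
      rw [Subgroup.mem_center_iff]
      intro g
      obtain ⟨g', rfl⟩ := ω0bij.surjective g
      rw [← map_mul, ← map_mul]
      congr 1
      have h4 := hζ₀cent c
      rw [Subgroup.mem_center_iff] at h4
      exact h4 g'
    have caseB : ∃ (ω : G ≃* G) (ζ' : C →* G), Function.Injective ζ' ∧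
        (∀ c : C, ζ' c ∈ Subgroup.center G) ∧
        ∀ z : G × G × C, z ∈ E ↔ ∃ (g : G) (c : C), z = (ω g * ζ' c, g, c) := by
      refine ⟨MulEquiv.ofBijective ω0 ω0bij, ζ, ζinj, ζcent, ?_⟩
      rintro ⟨x, g, c⟩
      constructor
      · intro hz
        have hx : ψ (g, c) = x := (hmemψ x (g, c)).1 hz
        refine ⟨g, c, ?_⟩
        rw [← hx, hsplit g c]
        rfl
      · rintro ⟨g', c', h⟩
        rw [h]
        have h2 := hψmem (g', c')
        rwa [hsplit g' c'] at h2
    right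
    exact ⟨caseB, fun ha => hne ⟨ha, caseB⟩⟩
end

section
/- Let G and H be groups and D ≤ G × H a subgroup with p₁(D) = G and p₂(D) = H. Let D° = {(h,g) ∈ H × G : (g,h) ∈ D}. Then D * D° = {(g₁,g₂) ∈ G × G : g₁g₂⁻¹ ∈ k₁(D)}, and moreover (D * D°) * (D * D°) = D * D°. -/
/-- The star product `M * N` of subgroups `M ≤ G × H` and `N ≤ H × K`:
`{(g,k) | ∃ h, (g,h) ∈ M ∧ (h,k) ∈ N}`. -/
def starProd {G H K : Type*} [Group G] [Group H] [Group K]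
    (M : Subgroup (G × H)) (N : Subgroup (H × K)) : Subgroup (G × K) where
  carrier := {x | ∃ h : H, (x.1, h) ∈ M ∧ (h, x.2) ∈ N}
  one_mem' := ⟨1, M.one_mem, N.one_mem⟩
  mul_mem' := by
    rintro ⟨g, k⟩ ⟨g', k'⟩ ⟨h, hM, hN⟩ ⟨h', hM', hN'⟩
    exact ⟨h * h', M.mul_mem hM hM', N.mul_mem hN hN'⟩
  inv_mem' := by
    rintro ⟨g, k⟩ ⟨h, hM, hN⟩
    exact ⟨h⁻¹, M.inv_mem hM, N.inv_mem hN⟩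

/-- The opposite subgroup `D° = {(h,g) | (g,h) ∈ D} ≤ H × G` of `D ≤ G × H`. -/
def oppSub {G H : Type*} [Group G] [Group H] (D : Subgroup (G × H)) :
    Subgroup (H × G) :=
  D.map (MulEquiv.prodComm : G × H ≃* H × G).toMonoidHom

section StarProd

variable {G H : Type*} [Group G] [Group H]

theorem mem_starProd {K : Type*} [Group K] {M : Subgroup (G × H)} {N : Subgroup (H × K)}
    {x : G × K} : x ∈ starProd M N ↔ ∃ h : H, (x.1, h) ∈ M ∧ (h, x.2) ∈ N :=
  Iff.rfl

theorem mem_oppSub {D : Subgroup (G × H)} {h : H} {g : G} : (h, g) ∈ oppSub D ↔ (g, h) ∈ D :=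
  Subgroup.mem_map_equiv

theorem exists_mem_of_map_fst_eq_top {D : Subgroup (G × H)}
    (hp1 : D.map (MonoidHom.fst G H) = ⊤) (g : G) : ∃ h : H, (g, h) ∈ D := by
  obtain ⟨⟨a, b⟩, hab, rfl⟩ : g ∈ D.map (MonoidHom.fst G H) := hp1 ▸ Subgroup.mem_top g
  exact ⟨b, hab⟩

theorem mem_starProd_oppSub_iff {D : Subgroup (G × H)}
    (hp1 : D.map (MonoidHom.fst G H) = ⊤) (x : G × G) :
    x ∈ starProd D (oppSub D) ↔ (x.1 * x.2⁻¹, 1) ∈ D := by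
  obtain ⟨g₁, g₂⟩ := x
  simp only [mem_starProd, mem_oppSub]
  constructor
  · rintro ⟨h, hg₁, hg₂⟩
    simpa using D.mul_mem hg₁ (D.inv_mem hg₂)
  · intro hk
    obtain ⟨h, hg₂⟩ := exists_mem_of_map_fst_eq_top hp1 g₂
    exact ⟨h, by simpa using D.mul_mem hk hg₂, hg₂⟩

/-- `(g₁, g₂) = (g₁, m) (m⁻¹, m⁻¹) (m, g₂)`, so a subgroup containing the diagonal is
transitive. -/
theorem starProd_self_eq_of_forall_mk_self_mem {S : Subgroup (G × G)} (hS : ∀ g, (g, g) ∈ S) :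
    starProd S S = S := by
  ext ⟨g₁, g₂⟩
  refine ⟨?_, fun hx => ⟨g₂, hx, hS g₂⟩⟩
  rintro ⟨m, h₁, h₂⟩
  simpa [mul_assoc] using S.mul_mem (S.mul_mem h₁ (hS m⁻¹)) h₂

end StarProd

theorem starProd_opp_eq_and_idem_general {G H : Type*} [Group G] [Group H]
    (D : Subgroup (G × H))
    (hp1 : D.map (MonoidHom.fst G H) = ⊤) :
    (∀ x : G × G,
      x ∈ starProd D (oppSub D) ↔ x.1 * x.2⁻¹ ∈ {g : G | (g, (1 : H)) ∈ D}) ∧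
    starProd (starProd D (oppSub D)) (starProd D (oppSub D))
      = starProd D (oppSub D) := by
  have hmem := mem_starProd_oppSub_iff hp1
  refine ⟨hmem, starProd_self_eq_of_forall_mk_self_mem fun g => (hmem (g, g)).2 ?_⟩
  rw [mul_inv_cancel]
  exact D.one_mem

/-- For `D ≤ G × H` with full projections, `D * D° = {(g₁,g₂) | g₁g₂⁻¹ ∈ k₁(D)}`
and `D * D°` is idempotent for the star product. -/
theorem starProd_opp_eq_and_idem {G H : Type*} [Group G] [Group H]
    (D : Subgroup (G × H))
    (hp1 : D.map (MonoidHom.fst G H) = ⊤)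
    (hp2 : D.map (MonoidHom.snd G H) = ⊤) :
    (∀ x : G × G,
      x ∈ starProd D (oppSub D) ↔ x.1 * x.2⁻¹ ∈ {g : G | (g, (1 : H)) ∈ D}) ∧
    starProd (starProd D (oppSub D)) (starProd D (oppSub D))
      = starProd D (oppSub D) :=
  starProd_opp_eq_and_idem_general D hp1
end

section
/- Let G be a finite group, p a prime number, C a cyclic group of order p, ω an automorphism of G, and ζ : C → G an injective homomorphism with image contained in the center Z(G). Then the following are equivalent: (i) there exist homomorphisms μ, ν : G → C such that μ(ω(g)·ζ(c))·ν(g) = c⁻¹ for all g ∈ G and c ∈ C; (ii) there exists a homomorphism μ : G → C such that μ ∘ ζ is not trivial. -/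
/-- Let `C` be cyclic of prime order `p`, `ω` an automorphism of the finite
group `G`, and `ζ : C →* G` an injective homomorphism with central image.  Then
there exist homomorphisms `μ, ν : G → C` with `μ(ω g · ζ c)·ν(g) = c⁻¹` for all
`g, c` iff some homomorphism `μ : G → C` has `μ ∘ ζ` nontrivial. -/
theorem exists_factorization_iff_exists_nontrivial_comp
    {G : Type*} [Group G] [Finite G] {p : ℕ} (hp : p.Prime)
    {C : Type*} [Group C] [IsCyclic C] (hC : Nat.card C = p)
    (ω : G ≃* G) (ζ : C →* G) (hinj : Function.Injective ζ)
    (hz : ∀ c : C, ζ c ∈ Subgroup.center G) :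
    (∃ (μ : G →* C) (ν : G →* C), ∀ (g : G) (c : C), μ (ω g * ζ c) * ν g = c⁻¹) ↔
      ∃ μ : G →* C, μ.comp ζ ≠ 1 := by
  haveI : Finite C := Nat.finite_of_card_ne_zero (by rw [hC]; exact hp.ne_zero)
  haveI : Nontrivial C := Finite.one_lt_card_iff_nontrivial.mp
    (by rw [hC]; exact hp.one_lt)
  have hcomm : ∀ a b : C, a * b = b * a := by
    letI := IsCyclic.commGroup (α := C); exact mul_comm
  constructor
  · rintro ⟨μ, ν, h⟩
    refine ⟨μ, fun heq => ?_⟩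
    obtain ⟨c, hc⟩ := exists_ne (1 : C)
    have h1 := h 1 c
    simp only [map_one, mul_one, one_mul] at h1
    have : μ.comp ζ c = 1 := by rw [heq]; rfl
    simp only [MonoidHom.comp_apply] at this
    rw [this] at h1
    exact hc (inv_eq_one.mp h1.symm)
  · rintro ⟨μ, hμ⟩
    haveI : Fact (Nat.card C).Prime := ⟨hC ▸ hp⟩
    have hker : (μ.comp ζ).ker = ⊥ := by
      rcases (μ.comp ζ).ker.eq_bot_or_eq_top_of_prime_card with h | h
      · exact h
      · exact absurd (MonoidHom.ext fun c => MonoidHom.mem_ker.mp (h ▸ Subgroup.mem_top c)) hμ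
    have hinjφ : Function.Injective (μ.comp ζ) := (MonoidHom.ker_eq_bot_iff _).mp hker
    have hbij : Function.Bijective (μ.comp ζ) := Finite.injective_iff_bijective.mp hinjφ
    set e := MulEquiv.ofBijective (μ.comp ζ) hbij with he
    have hes : ∀ c : C, e.symm (μ (ζ c)) = c := fun c =>
      e.symm_apply_apply c
    refine ⟨⟨⟨fun g => (e.symm (μ g))⁻¹, by simp⟩, fun a b => by
        simp [mul_inv, hcomm]⟩,
      (e.symm.toMonoidHom.comp μ).comp ω.toMonoidHom, fun g c => ?_⟩
    simp only [MonoidHom.coe_mk, OneHom.coe_mk, MonoidHom.comp_apply,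
      MulEquiv.coe_toMonoidHom, MulEquiv.coe_toMonoidHom]
    rw [map_mul, map_mul, hes c, mul_inv_rev, mul_assoc, inv_mul_cancel, mul_one]
end

section
/- Let G be the quaternion group of order 8 (Mathlib's QuaternionGroup 2), let z = x² be its unique central element of order 2, and let C be a cyclic group of order 4 with generator c. Let D' = {(g₁,g₂) ∈ G × G : g₁g₂⁻¹ ∈ {1, z}} (a subgroup of G × G), and let δ' : D' → C be the homomorphism with δ'(g₁,g₂) = 1 if g₁ = g₂ and δ'(g₁,g₂) = c² if g₁ ≠ g₂. Then there do NOT exist a finite group K with |K| < 8, subgroups U ≤ G × K and V ≤ K × G with U * V = D', and homomorphisms μ : U → C and ν : V → C such that μ(g₁,h)·ν(h,g₂) = δ'(g₁,g₂) for all g₁, g₂ ∈ G and h ∈ K with (g₁,h) ∈ U and (h,g₂) ∈ V. -/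
set_option maxRecDepth 10000

open QuaternionGroup

private lemma Dq_mul :
    ∀ x y : QuaternionGroup 2 × QuaternionGroup 2,
      (x.1 * x.2⁻¹ = 1 ∨ x.1 * x.2⁻¹ = a 2) →
      (y.1 * y.2⁻¹ = 1 ∨ y.1 * y.2⁻¹ = a 2) →
      ((x * y).1 * (x * y).2⁻¹ = 1 ∨ (x * y).1 * (x * y).2⁻¹ = a 2) := by
  decide

private lemma Dq_inv :
    ∀ x : QuaternionGroup 2 × QuaternionGroup 2,
      (x.1 * x.2⁻¹ = 1 ∨ x.1 * x.2⁻¹ = a 2) →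
      (x⁻¹.1 * x⁻¹.2⁻¹ = 1 ∨ x⁻¹.1 * x⁻¹.2⁻¹ = a 2) := by
  decide

/-- The subgroup `D' = {(g₁,g₂) | g₁g₂⁻¹ ∈ {1, x²}}` of `Q₈ × Q₈`, where
`x² = a 2` is the central element of order 2. -/
def Dq : Subgroup (QuaternionGroup 2 × QuaternionGroup 2) where
  carrier := {x | x.1 * x.2⁻¹ = 1 ∨ x.1 * x.2⁻¹ = a 2}
  one_mem' := by decide
  mul_mem' := fun hx hy => Dq_mul _ _ hx hy
  inv_mem' := fun hx => Dq_inv _ hx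

/-!
Suppose such a factorisation exists. Since every `(g, g)` lies in `U * V`, the projection
`U → Q₈` is onto, so `U` has at least 8 elements and cannot embed in `K`; hence
`{g | (g, 1) ∈ U}` is a nontrivial subgroup of `Q₈` and contains the central element `z`.
Comparing `δ'(1, 1) = 1` with `δ'(z, 1) = c²` gives `μ(z, 1) = c²`. Lifting `x` and `y` to
`(x, h₁), (y, h₂) ∈ U`, their commutator is `(z, ⁅h₁, h₂⁆)`, which `μ` sends to `1` because `C`
is abelian; so `μ(1, ⁅h₁, h₂⁆) = c⁻²` has order 2 and `⁅h₁, h₂⁆` has even order. But in a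
group of order less than 8 every commutator has odd order.
-/

open scoped commutatorElement

theorem Subgroup.commutatorElement_mem_of_index_two {G : Type*} [Group G] {H : Subgroup G}
    (hH : H.index = 2) (x y : G) : ⁅x, y⁆ ∈ H := by
  rw [commutatorElement_def, mul_mem_iff_of_index_two hH, mul_mem_iff_of_index_two hH,
    mul_mem_iff_of_index_two hH, inv_mem_iff, inv_mem_iff]
  tauto

theorem not_two_dvd_orderOf_commutatorElement_of_card_lt_eight {K : Type*} [Group K] [Finite K]
    (hK : Nat.card K < 8) (x y : K) : ¬ 2 ∣ orderOf ⁅x, y⁆ := by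
  intro h2
  have h2K : 2 ∣ Nat.card K := h2.trans (orderOf_dvd_natCard _)
  have hcomm (_ : IsMulCommutative K) : False := by
    simp [commutatorElement_eq_one_iff_commute.mpr (mul_comm' x y)] at h2
  have := Nat.card_pos (α := K)
  rcases (by omega : Nat.card K = 2 ∨ Nat.card K = 4 ∨ Nat.card K = 6) with hK | hK | hK
  · have : IsCyclic K := isCyclic_of_prime_card hK
    exact hcomm inferInstance
  · exact hcomm (IsPGroup.isMulCommutative_of_card_eq_prime_sq (p := 2) hK)
  · obtain ⟨t, ht⟩ := exists_prime_orderOf_dvd_card' 3 (by rw [hK]; norm_num)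
    have hindex : (Subgroup.zpowers t).index = 2 := by
      have := (Subgroup.zpowers t).card_mul_index
      rw [Nat.card_zpowers, ht, hK] at this
      omega
    have h3 := (Subgroup.zpowers t).orderOf_dvd_natCard
      (Subgroup.commutatorElement_mem_of_index_two hindex x y)
    rw [Nat.card_zpowers, ht] at h3
    exact absurd (h2.trans h3) (by norm_num)

theorem Subgroup.comap_inl_ne_bot_of_card_lt {G K : Type*} [Group G] [Group K] [Finite K]
    {U : Subgroup (G × K)} (hU : ∀ g, ∃ k, (g, k) ∈ U) (hcard : Nat.card K < Nat.card G) :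
    U.comap (MonoidHom.inl G K) ≠ ⊥ := by
  intro hbot
  have hinj : Function.Injective ((MonoidHom.snd G K).comp U.subtype) := by
    rw [injective_iff_map_eq_one]
    rintro ⟨⟨g, k⟩, hgk⟩ (rfl : k = 1)
    obtain rfl : g = 1 := (eq_bot_iff_forall _).1 hbot g hgk
    rfl
  have hsurj : Function.Surjective ((MonoidHom.fst G K).comp U.subtype) := fun g =>
    let ⟨k, hk⟩ := hU g
    ⟨⟨(g, k), hk⟩, rfl⟩
  have : Finite U := Finite.of_injective _ hinj
  have := Nat.card_le_card_of_surjective _ hsurj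
  have := Nat.card_le_card_of_injective _ hinj
  omega

theorem QuaternionGroup.a_two_mem_of_ne_bot {H : Subgroup (QuaternionGroup 2)} (hH : H ≠ ⊥) :
    a 2 ∈ H := by
  obtain ⟨g, hg, hg1⟩ := H.bot_or_exists_ne_one.resolve_left hH
  have key : ∀ g : QuaternionGroup 2, g ≠ 1 → g = a 2 ∨ g ^ 2 = a 2 := by decide
  rcases key g hg1 with rfl | hsq
  · exact hg
  · exact hsq ▸ H.pow_mem hg 2

theorem orderOf_map_dvd_orderOf_commutatorElement {G K C : Type*} [Group G] [Group K] [Group C]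
    [IsMulCommutative C] {U : Subgroup (G × K)} (μ : U →* C) {g₁ g₂ g : G} {k₁ k₂ : K}
    (h₁ : (g₁, k₁) ∈ U) (h₂ : (g₂, k₂) ∈ U) (hg : ⁅g₁, g₂⁆ = g) (hgU : (g, 1) ∈ U) :
    orderOf (μ ⟨(g, 1), hgU⟩) ∣ orderOf ⁅k₁, k₂⁆ := by
  set w : U := ⟨(g, 1), hgU⟩⁻¹ * ⁅(⟨(g₁, k₁), h₁⟩ : U), ⟨(g₂, k₂), h₂⟩⁆
  have hw : (w : G × K) = (1, ⁅k₁, k₂⁆) := by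
    ext
    · change g⁻¹ * ⁅g₁, g₂⁆ = 1
      rw [hg, inv_mul_cancel]
    · change (1 : K)⁻¹ * ⁅k₁, k₂⁆ = ⁅k₁, k₂⁆
      rw [inv_one, one_mul]
  have hμw : μ w = (μ ⟨(g, 1), hgU⟩)⁻¹ := by
    rw [map_mul, map_inv, map_commutatorElement,
      commutatorElement_eq_one_iff_commute.mpr (mul_comm' _ _), mul_one]
  rw [← orderOf_inv, ← hμw]
  simpa [← Subgroup.orderOf_coe w, hw, Prod.orderOf] using orderOf_map_dvd μ w

/-- The element `(g₁,g₂) ↦ (1 if g₁ = g₂ else c²)` of `kB_C¹(Q₈ × Q₈)` does not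
factor through any group of order `< 8` compatibly with characters: the
counterexample idempotent has nonzero class in `\hat{kB_C^1}(Q₈)`. -/
theorem no_factorization_through_smaller_group
    {C : Type*} [Group C] (c : C) (hc : orderOf c = 4)
    (hgen : ∀ z : C, z ∈ Subgroup.zpowers c)
    (δ' : Dq →* C)
    (hδ' : ∀ x : Dq,
      δ' x = if (x : QuaternionGroup 2 × QuaternionGroup 2).1
               = (x : QuaternionGroup 2 × QuaternionGroup 2).2 then 1 else c ^ 2) :
    ¬ ∃ (K : Type) (_ : Group K) (_ : Fintype K), Fintype.card K < 8 ∧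
      ∃ (U : Subgroup (QuaternionGroup 2 × K)) (V : Subgroup (K × QuaternionGroup 2)),
        starProd U V = Dq ∧
        ∃ (μ : U →* C) (ν : V →* C),
          ∀ (g₁ g₂ : QuaternionGroup 2) (h : K)
            (hU : (g₁, h) ∈ U) (hV : (h, g₂) ∈ V) (hD : (g₁, g₂) ∈ Dq),
            μ ⟨(g₁, h), hU⟩ * ν ⟨(h, g₂), hV⟩ = δ' ⟨(g₁, g₂), hD⟩ := by
  rintro ⟨K, _, _, hK, U, V, hUV, μ, ν, hcompat⟩
  have : IsCyclic C := ⟨c, hgen⟩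
  have hdiag (g : QuaternionGroup 2) : ∃ k, (g, k) ∈ U ∧ (k, g) ∈ V :=
    show (g, g) ∈ starProd U V from hUV ▸ Or.inl (mul_inv_cancel g)
  have hz : (a 2, 1) ∈ U := a_two_mem_of_ne_bot <|
    U.comap_inl_ne_bot_of_card_lt (fun g => (hdiag g).imp fun _ => And.left)
      (by rwa [Nat.card_eq_fintype_card, Nat.card_eq_fintype_card, QuaternionGroup.card])
  set z : U := ⟨(a 2, 1), hz⟩
  have hμz : μ z = c ^ 2 := by
    obtain ⟨k, hUk, hVk⟩ := hdiag 1
    have h₁ := hcompat 1 1 k hUk hVk Dq.one_mem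
    have hUzk : (a 2, k) ∈ U := by simpa using U.mul_mem hz hUk
    have h₂ := hcompat (a 2) 1 k hUzk hVk (Or.inr (by decide))
    rw [hδ', if_pos rfl] at h₁
    rw [hδ', if_neg (by decide),
      show (⟨(a 2, k), hUzk⟩ : U) = z * ⟨_, hUk⟩ from Subtype.ext (by simp [z])] at h₂
    rwa [map_mul, mul_assoc, h₁, mul_one] at h₂
  obtain ⟨k₁, hU₁, -⟩ := hdiag (a 1)
  obtain ⟨k₂, hU₂, -⟩ := hdiag (xa 0)
  have hord := orderOf_map_dvd_orderOf_commutatorElement μ hU₁ hU₂ (by decide) hz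
  rw [hμz, orderOf_pow_of_dvd two_ne_zero (by rw [hc]; norm_num), hc] at hord
  exact not_two_dvd_orderOf_commutatorElement_of_card_lt_eight
    (by simpa [Nat.card_eq_fintype_card] using hK) k₁ k₂ hord
end

section
/- Let G be the quaternion group of order 8 with generators x, y (x⁴ = 1, yxy⁻¹ = x⁻¹, x² = y²) and H the dihedral group of order 8 with generators a, b (a⁴ = b² = 1, bab⁻¹ = a⁻¹). Let D ≤ G × H be the subgroup generated by (x,a) and (y,b), and let C be a cyclic group of order 4 with generator c. Then there exists a group homomorphism δ : D → C with δ(x,a) = c² and δ(y,b) = c⁻¹; moreover for any such δ: if (g,1) ∈ D and δ(g,1) = 1 then g = 1, and if (1,h) ∈ D and δ(1,h) = 1 then h = 1. Since G and H are not isomorphic, this exhibits, for C of order 4, non-isomorphic groups G, H of equal order admitting such a pair (D, δ). -/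
open QuaternionGroup DihedralGroup

/-- The subgroup `D` of `Q₈ × D₈` generated by `(x,a)` and `(y,b)`, where
`x = a 1`, `y = xa 0` generate the quaternion group and `a = r 1`, `b = sr 0`
generate the dihedral group. -/
def Dqd : Subgroup (QuaternionGroup 2 × DihedralGroup 4) :=
  Subgroup.closure {(a 1, r 1), (xa 0, sr 0)}

/-!
Every element `(g, h)` of `D` has `g` and `h` of the same kind (both rotations or both
reflections) with indices congruent mod 2.  On this subgroup of `Q₈ × D₈` the weight
`(a i, r j) ↦ i + j`, `(xa i, sr j) ↦ -1 - i - j` is a homomorphism to `ZMod 4` taking the values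
`2` and `-1` on the generators of `D`; followed by `k ↦ c ^ k` it is the unique `δ`.  If
`(g, 1) ∈ D` then `g = a 0` or `a 2`, of weight `0` resp. `2`, and similarly for `(1, h)`; as `c`
has order `4`, only weight `0` lies in `ker δ`.  Finally `Q₈` has a single involution, `D₈` several.
-/

section ZModPow

variable {G : Type*} [Group G] {n : ℕ} [NeZero n] {c : G}

def zmodPowHom (c : G) (hc : orderOf c = n) : Multiplicative (ZMod n) →* G where
  toFun k := c ^ k.toAdd.val
  map_one' := by simp
  map_mul' x y := by
    subst hc
    rw [← pow_add, toAdd_mul, ZMod.val_add, pow_mod_orderOf]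

@[simp]
lemma zmodPowHom_apply (hc : orderOf c = n) (k : Multiplicative (ZMod n)) :
    zmodPowHom c hc k = c ^ k.toAdd.val :=
  rfl

lemma zmodPowHom_eq_one_iff (hc : orderOf c = n) {k : Multiplicative (ZMod n)} :
    zmodPowHom c hc k = 1 ↔ k = 1 := by
  refine ⟨fun hk => ?_, fun hk => hk ▸ map_one _⟩
  have hdvd : orderOf c ∣ k.toAdd.val := orderOf_dvd_of_pow_eq_one hk
  rw [hc] at hdvd
  exact toAdd_eq_zero.mp <| (ZMod.val_eq_zero _).mp <|
    Nat.eq_zero_of_dvd_of_lt hdvd (ZMod.val_lt _)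

end ZModPow

def IsSameParity : QuaternionGroup 2 × DihedralGroup 4 → Prop
  | (a i, r j) => i = j ∨ i = j + 2
  | (xa i, sr j) => i = j ∨ i = j + 2
  | _ => False

instance : DecidablePred IsSameParity := by
  rintro ⟨g | g, h | h⟩ <;> unfold IsSameParity <;> infer_instance

set_option maxRecDepth 4000 in
def sameParity : Subgroup (QuaternionGroup 2 × DihedralGroup 4) where
  carrier := {p | IsSameParity p}
  one_mem' := by decide
  mul_mem' {p q} :=
    (by decide : ∀ p q, IsSameParity p → IsSameParity q → IsSameParity (p * q)) p q
  inv_mem' {p} := (by decide : ∀ p, IsSameParity p → IsSameParity p⁻¹) p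

lemma Dqd_le_sameParity : Dqd ≤ sameParity :=
  Subgroup.closure_le _ |>.mpr <| by
    rintro p (rfl | rfl) <;> exact Or.inl rfl

def parityWeight : QuaternionGroup 2 × DihedralGroup 4 → ZMod 4
  | (a i, r j) => i + j
  | (xa i, sr j) => -1 - i - j
  | _ => 0

set_option maxRecDepth 4000 in
def parityWeightHom : sameParity →* Multiplicative (ZMod 4) where
  toFun p := .ofAdd (parityWeight p)
  map_one' := by decide
  map_mul' p q := by
    have hmul : ∀ p q, IsSameParity p → IsSameParity q →
        parityWeight (p * q) = parityWeight p + parityWeight q := by decide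
    exact congrArg Multiplicative.ofAdd (hmul p q p.2 q.2)

lemma eq_one_of_parityWeight_eq_zero_left {g : QuaternionGroup 2} (hg : (g, 1) ∈ sameParity)
    (hw : parityWeight (g, 1) = 0) : g = 1 :=
  (by decide : ∀ g, IsSameParity (g, 1) → parityWeight (g, 1) = 0 → g = 1) g hg hw

lemma eq_one_of_parityWeight_eq_zero_right {h : DihedralGroup 4} (hh : (1, h) ∈ sameParity)
    (hw : parityWeight (1, h) = 0) : h = 1 :=
  (by decide : ∀ h, IsSameParity (1, h) → parityWeight (1, h) = 0 → h = 1) h hh hw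

namespace Dqd

lemma a_one_r_one_mem : ((a 1, r 1) : QuaternionGroup 2 × DihedralGroup 4) ∈ Dqd :=
  Subgroup.subset_closure (by simp)

lemma xa_zero_sr_zero_mem : ((xa 0, sr 0) : QuaternionGroup 2 × DihedralGroup 4) ∈ Dqd :=
  Subgroup.subset_closure (by simp)

lemma hom_ext {M : Type*} [Monoid M] {f g : Dqd →* M}
    (hx : f ⟨_, a_one_r_one_mem⟩ = g ⟨_, a_one_r_one_mem⟩)
    (hy : f ⟨_, xa_zero_sr_zero_mem⟩ = g ⟨_, xa_zero_sr_zero_mem⟩) : f = g :=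
  MonoidHom.eq_of_eqOn_dense Subgroup.closure_closure_coe_preimage <| by
    rintro ⟨p, hp⟩ (rfl | rfl)
    exacts [hx, hy]

end Dqd

lemma QuaternionGroup.eq_a_two_of_sq_eq_one {g : QuaternionGroup 2} (hg : g ^ 2 = 1)
    (hg₁ : g ≠ 1) : g = a 2 :=
  (by decide : ∀ g : QuaternionGroup 2, g ^ 2 = 1 → g ≠ 1 → g = a 2) g hg hg₁

lemma QuaternionGroup.not_nonempty_mulEquiv_dihedralGroup :
    ¬ Nonempty (QuaternionGroup 2 ≃* DihedralGroup 4) := by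
  rintro ⟨e⟩
  have hsr : ∀ j, e.symm (sr j) = a 2 := fun j =>
    eq_a_two_of_sq_eq_one (by rw [← map_pow, sq, sr_mul_self, map_one]) (by
      rw [Ne, MulEquiv.map_eq_one_iff, DihedralGroup.one_def]
      exact nofun)
  exact absurd (e.symm.injective ((hsr 0).trans (hsr 1).symm)) (by decide)

theorem quaternion_dihedral_counterexample_general
    {C : Type*} [Group C] (c : C) (hc : orderOf c = 4) :
    (∃ δ : Dqd →* C,
      (∀ hm : ((a 1 : QuaternionGroup 2), (r 1 : DihedralGroup 4)) ∈ Dqd,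
        δ ⟨_, hm⟩ = c ^ 2) ∧
      (∀ hm : ((xa 0 : QuaternionGroup 2), (sr 0 : DihedralGroup 4)) ∈ Dqd,
        δ ⟨_, hm⟩ = c⁻¹)) ∧
    (∀ δ : Dqd →* C,
      (∀ hm : ((a 1 : QuaternionGroup 2), (r 1 : DihedralGroup 4)) ∈ Dqd,
        δ ⟨_, hm⟩ = c ^ 2) →
      (∀ hm : ((xa 0 : QuaternionGroup 2), (sr 0 : DihedralGroup 4)) ∈ Dqd,
        δ ⟨_, hm⟩ = c⁻¹) →
      (∀ (g : QuaternionGroup 2) (hm : (g, (1 : DihedralGroup 4)) ∈ Dqd),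
        δ ⟨_, hm⟩ = 1 → g = 1) ∧
      (∀ (h : DihedralGroup 4) (hm : ((1 : QuaternionGroup 2), h) ∈ Dqd),
        δ ⟨_, hm⟩ = 1 → h = 1)) ∧
    ¬ Nonempty (QuaternionGroup 2 ≃* DihedralGroup 4) ∧
    Nat.card (QuaternionGroup 2) = Nat.card (DihedralGroup 4) := by
  set δ₀ : Dqd →* C :=
    (zmodPowHom c hc).comp (parityWeightHom.comp (Subgroup.inclusion Dqd_le_sameParity))
  have hδ₀ : ∀ p, δ₀ p = 1 ↔ parityWeight p.1 = 0 := fun p => zmodPowHom_eq_one_iff hc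
  have hx : δ₀ ⟨_, Dqd.a_one_r_one_mem⟩ = c ^ 2 := rfl
  have hy : δ₀ ⟨_, Dqd.xa_zero_sr_zero_mem⟩ = c⁻¹ := by
    change zmodPowHom c hc (.ofAdd (-1)) = c⁻¹
    rw [ofAdd_neg, map_inv, zmodPowHom_apply, toAdd_ofAdd]
    exact congrArg _ (pow_one c)
  refine ⟨⟨δ₀, fun _ => hx, fun _ => hy⟩, fun δ h₁ h₂ => ?_,
    QuaternionGroup.not_nonempty_mulEquiv_dihedralGroup, ?_⟩
  · obtain rfl : δ = δ₀ := Dqd.hom_ext ((h₁ _).trans hx.symm) ((h₂ _).trans hy.symm)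
    exact ⟨fun g hm hg => eq_one_of_parityWeight_eq_zero_left (Dqd_le_sameParity hm)
        ((hδ₀ _).mp hg),
      fun h hm hh => eq_one_of_parityWeight_eq_zero_right (Dqd_le_sameParity hm)
        ((hδ₀ _).mp hh)⟩
  · rw [Nat.card_eq_fintype_card, QuaternionGroup.card, DihedralGroup.nat_card]

/-- Let `C = ⟨c⟩` be cyclic of order 4.  There is a homomorphism
`δ : D → C` with `δ(x,a) = c²` and `δ(y,b) = c⁻¹`; any such `δ` satisfies
`k₁(D_δ) = 1` and `k₂(D_δ) = 1`; and `Q₈ ≇ D₈` while `|Q₈| = |D₈|`, so this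
exhibits two non-isomorphic minimal groups of equal order. -/
theorem quaternion_dihedral_counterexample
    {C : Type*} [Group C] (c : C) (hc : orderOf c = 4)
    (hgen : ∀ z : C, z ∈ Subgroup.zpowers c) :
    (∃ δ : Dqd →* C,
      (∀ hm : ((a 1 : QuaternionGroup 2), (r 1 : DihedralGroup 4)) ∈ Dqd,
        δ ⟨_, hm⟩ = c ^ 2) ∧
      (∀ hm : ((xa 0 : QuaternionGroup 2), (sr 0 : DihedralGroup 4)) ∈ Dqd,
        δ ⟨_, hm⟩ = c⁻¹)) ∧
    (∀ δ : Dqd →* C,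
      (∀ hm : ((a 1 : QuaternionGroup 2), (r 1 : DihedralGroup 4)) ∈ Dqd,
        δ ⟨_, hm⟩ = c ^ 2) →
      (∀ hm : ((xa 0 : QuaternionGroup 2), (sr 0 : DihedralGroup 4)) ∈ Dqd,
        δ ⟨_, hm⟩ = c⁻¹) →
      (∀ (g : QuaternionGroup 2) (hm : (g, (1 : DihedralGroup 4)) ∈ Dqd),
        δ ⟨_, hm⟩ = 1 → g = 1) ∧
      (∀ (h : DihedralGroup 4) (hm : ((1 : QuaternionGroup 2), h) ∈ Dqd),
        δ ⟨_, hm⟩ = 1 → h = 1)) ∧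
    ¬ Nonempty (QuaternionGroup 2 ≃* DihedralGroup 4) ∧
    Nat.card (QuaternionGroup 2) = Nat.card (DihedralGroup 4) :=
  quaternion_dihedral_counterexample_general c hc
end

section
/- Let G, H, K be groups, C an abelian group, V ≤ G × H and U ≤ H × K subgroups, ν : V → C and μ : U → C homomorphisms, and h ∈ H. Write ⁽ʰ'¹⁾U = {(h·h₁·h⁻¹, k) : (h₁,k) ∈ U}. Then the following are equivalent: (i) ν(1,h')·μ(h⁻¹h'h, 1) = 1 for every h' ∈ H with (1,h') ∈ V and (h⁻¹h'h, 1) ∈ U; (ii) there is a well-defined group homomorphism φ : V * ⁽ʰ'¹⁾U → C satisfying φ(g,k) = ν(g,h₁)·μ(h⁻¹h₁h, k) whenever h₁ ∈ H is such that (g,h₁) ∈ V and (h⁻¹h₁h, k) ∈ U. -/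
/-- The conjugate `⁽ʰ'¹⁾U = {(h h₁ h⁻¹, k) | (h₁,k) ∈ U}` of `U ≤ H × K`. -/
def conjSub {H K : Type*} [Group H] [Group K] (h : H) (U : Subgroup (H × K)) :
    Subgroup (H × K) :=
  U.map (((MulAut.conj h).toMonoidHom).prodMap (MonoidHom.id K))

lemma mem_starProd_conj {G H K : Type*} [Group G] [Group H] [Group K]
    (V : Subgroup (G × H)) (U : Subgroup (H × K)) (h : H) {g : G} {k : K}
    (hs : (g, k) ∈ starProd V (conjSub h U)) :
    ∃ h₁ : H, (g, h₁) ∈ V ∧ (h⁻¹ * h₁ * h, k) ∈ U := by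
  obtain ⟨h₀, hV, hU⟩ := hs
  obtain ⟨⟨u1, u2⟩, hu, he⟩ := hU
  have he' : h * u1 * h⁻¹ = h₀ ∧ u2 = k := by
    simpa [Prod.ext_iff, MulAut.conj_apply] using he
  refine ⟨h₀, hV, ?_⟩
  have h1 : h⁻¹ * h₀ * h = u1 := by rw [← he'.1]; group
  rw [h1, ← he'.2]; exact hu

/-- Condition (i) `ν(1,h')·μ(h⁻¹h'h,1) = 1` for all relevant `h'` holds iff the
twisted character product `φ(g,k) = ν(g,h₁)·μ(h⁻¹h₁h,k)` is a well-defined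
homomorphism on `V * ⁽ʰ'¹⁾U`. -/
theorem character_product_welldefined_iff
    {G H K C : Type*} [Group G] [Group H] [Group K] [CommGroup C]
    (V : Subgroup (G × H)) (U : Subgroup (H × K))
    (ν : V →* C) (μ : U →* C) (h : H) :
    (∀ (h' : H) (hv : ((1 : G), h') ∈ V) (hu : (h⁻¹ * h' * h, (1 : K)) ∈ U),
        ν ⟨(1, h'), hv⟩ * μ ⟨(h⁻¹ * h' * h, 1), hu⟩ = 1) ↔
      ∃ φ : starProd V (conjSub h U) →* C,
        ∀ (g : G) (k : K) (h₁ : H) (hv : (g, h₁) ∈ V)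
          (hu : (h⁻¹ * h₁ * h, k) ∈ U) (hs : (g, k) ∈ starProd V (conjSub h U)),
          φ ⟨(g, k), hs⟩ = ν ⟨(g, h₁), hv⟩ * μ ⟨(h⁻¹ * h₁ * h, k), hu⟩ := by
  constructor
  · intro cond
    -- well-definedness key lemma
    have key : ∀ (g : G) (k : K) (h₁ h₂ : H) (hv₁ : (g, h₁) ∈ V)
        (hv₂ : (g, h₂) ∈ V) (hu₁ : (h⁻¹ * h₁ * h, k) ∈ U)
        (hu₂ : (h⁻¹ * h₂ * h, k) ∈ U),
        ν ⟨(g, h₁), hv₁⟩ * μ ⟨(h⁻¹ * h₁ * h, k), hu₁⟩ =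
        ν ⟨(g, h₂), hv₂⟩ * μ ⟨(h⁻¹ * h₂ * h, k), hu₂⟩ := by
      intro g k h₁ h₂ hv₁ hv₂ hu₁ hu₂
      have hv' : ((1 : G), h₁ * h₂⁻¹) ∈ V := by
        have := V.mul_mem hv₁ (V.inv_mem hv₂)
        simpa using this
      have hu' : (h⁻¹ * (h₁ * h₂⁻¹) * h, (1 : K)) ∈ U := by
        have h0 := U.mul_mem hu₁ (U.inv_mem hu₂)
        have he : ((h⁻¹ * h₁ * h : H), k) * ((h⁻¹ * h₂ * h : H), k)⁻¹
            = (h⁻¹ * (h₁ * h₂⁻¹) * h, (1 : K)) := by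
          rw [Prod.inv_mk, Prod.mk_mul_mk, Prod.mk.injEq]
          exact ⟨by group, by simp⟩
        rwa [he] at h0
      have hc := cond (h₁ * h₂⁻¹) hv' hu'
      have e1 : (⟨(g, h₁), hv₁⟩ : V) = ⟨((1 : G), h₁ * h₂⁻¹), hv'⟩ * ⟨(g, h₂), hv₂⟩ := by
        ext <;> simp
      have e2 : (⟨(h⁻¹ * h₁ * h, k), hu₁⟩ : U)
          = ⟨(h⁻¹ * (h₁ * h₂⁻¹) * h, (1 : K)), hu'⟩ * ⟨(h⁻¹ * h₂ * h, k), hu₂⟩ :=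
        Subtype.ext (by
          show ((h⁻¹ * h₁ * h : H), k)
              = (h⁻¹ * (h₁ * h₂⁻¹) * h, (1 : K)) * ((h⁻¹ * h₂ * h : H), k)
          rw [Prod.mk_mul_mk, Prod.mk.injEq]
          exact ⟨by group, (one_mul k).symm⟩)
      rw [e1, e2, map_mul, map_mul]
      calc ν ⟨((1:G), h₁ * h₂⁻¹), hv'⟩ * ν ⟨(g, h₂), hv₂⟩ *
            (μ ⟨(h⁻¹ * (h₁ * h₂⁻¹) * h, (1:K)), hu'⟩ * μ ⟨(h⁻¹ * h₂ * h, k), hu₂⟩)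
          = (ν ⟨((1:G), h₁ * h₂⁻¹), hv'⟩ * μ ⟨(h⁻¹ * (h₁ * h₂⁻¹) * h, (1:K)), hu'⟩) *
            (ν ⟨(g, h₂), hv₂⟩ * μ ⟨(h⁻¹ * h₂ * h, k), hu₂⟩) := mul_mul_mul_comm _ _ _ _
        _ = ν ⟨(g, h₂), hv₂⟩ * μ ⟨(h⁻¹ * h₂ * h, k), hu₂⟩ := by rw [hc, one_mul]
    -- construct φ using choice
    set S := starProd V (conjSub h U) with hS
    have wit : ∀ x : S, ∃ h₁ : H, (x.1.1, h₁) ∈ V ∧ (h⁻¹ * h₁ * h, x.1.2) ∈ U :=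
      fun x => mem_starProd_conj V U h x.2
    choose w hwV hwU using wit
    let f : S → C := fun x =>
      ν ⟨(x.1.1, w x), hwV x⟩ * μ ⟨(h⁻¹ * w x * h, x.1.2), hwU x⟩
    have hf : ∀ x y : S, f (x * y) = f x * f y := by
      intro x y
      have hvxy : ((x * y).1.1, w x * w y) ∈ V := by
        have := V.mul_mem (hwV x) (hwV y)
        exact this
      have huxy : (h⁻¹ * (w x * w y) * h, (x * y).1.2) ∈ U := by
        have h0 := U.mul_mem (hwU x) (hwU y)
        have he : ((h⁻¹ * w x * h : H), x.1.2) * ((h⁻¹ * w y * h : H), y.1.2)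
            = (h⁻¹ * (w x * w y) * h, (x * y).1.2) := by
          rw [Prod.mk_mul_mk, Prod.mk.injEq]
          exact ⟨by group, rfl⟩
        rwa [he] at h0
      have := key (x * y).1.1 (x * y).1.2 (w (x * y)) (w x * w y)
        (hwV (x * y)) hvxy (hwU (x * y)) huxy
      calc f (x * y) = ν ⟨((x * y).1.1, w x * w y), hvxy⟩ *
            μ ⟨(h⁻¹ * (w x * w y) * h, (x * y).1.2), huxy⟩ := this
        _ = f x * f y := by
            have e1 : (⟨((x * y).1.1, w x * w y), hvxy⟩ : V)
                = ⟨(x.1.1, w x), hwV x⟩ * ⟨(y.1.1, w y), hwV y⟩ := rfl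
            have e2 : (⟨(h⁻¹ * (w x * w y) * h, (x * y).1.2), huxy⟩ : U)
                = ⟨(h⁻¹ * w x * h, x.1.2), hwU x⟩ * ⟨(h⁻¹ * w y * h, y.1.2), hwU y⟩ :=
              Subtype.ext (by
                show ((h⁻¹ * (w x * w y) * h : H), (x * y).1.2)
                    = ((h⁻¹ * w x * h : H), x.1.2) * ((h⁻¹ * w y * h : H), y.1.2)
                rw [Prod.mk_mul_mk, Prod.mk.injEq]
                exact ⟨by group, rfl⟩)
            rw [e1, e2, map_mul, map_mul]
            exact mul_mul_mul_comm _ _ _ _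
    refine ⟨MonoidHom.mk' f hf, ?_⟩
    intro g k h₁ hv hu hs
    exact key g k (w ⟨(g, k), hs⟩) h₁ (hwV ⟨(g, k), hs⟩) hv (hwU ⟨(g, k), hs⟩) hu
  · rintro ⟨φ, hφ⟩ h' hv hu
    have hs : ((1 : G), (1 : K)) ∈ starProd V (conjSub h U) :=
      ⟨h', hv, ⟨(h⁻¹ * h' * h, 1), hu, by simp [MulAut.conj_apply, mul_assoc]⟩⟩
    have := hφ 1 1 h' hv hu hs
    have h1 : (⟨((1 : G), (1 : K)), hs⟩ : starProd V (conjSub h U)) = 1 := by ext <;> rfl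
    rw [h1, map_one] at this
    exact this.symm
end

section
/- Let G, H, K be groups, C an abelian group, V ≤ G × H and U ≤ H × K subgroups, and ν : V → C, μ : U → C homomorphisms. Let V_ν = {(g, h, ν(g,h)⁻¹) : (g,h) ∈ V} ≤ G × H × C and U_μ = {(h, k, μ(h,k)⁻¹) : (h,k) ∈ U} ≤ H × K × C, let X = (G × H × C)/V_ν and Y = (H × K × C)/U_μ with left translation actions, let W be the set of orbits of X × Y under the H × C action (h',c)·(x,y) = ((1,h',c)·x, (h',1,c⁻¹)·y), and let C act on W by c·[x,y] = [(1,1,c)·x, y]. Fix h ∈ H and let w_h ∈ W be the class of (V_ν, (h,1,1)·U_μ). Then the stabilizer of w_h under the C-action equals {ν(1,h')·μ(h⁻¹h'h, 1) : h' ∈ H, (1,h') ∈ V, (h⁻¹h'h, 1) ∈ U}. In particular, C acts freely on the orbit of w_h if and only if ν(1,h')·μ(h⁻¹h'h,1) = 1 for all such h'. -/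
/-- The homomorphism `V → A × B × C`, `v ↦ (v₁, v₂, ν(v)⁻¹)` attached to a
subgroup `V ≤ A × B` and a character `ν : V → C`. -/
def twistHom {A B C : Type*} [Group A] [Group B] [CommGroup C]
    (V : Subgroup (A × B)) (ν : V →* C) : V →* A × B × C where
  toFun v := ((v : A × B).1, (v : A × B).2, (ν v)⁻¹)
  map_one' := by simp
  map_mul' x y := by
    simp [Prod.ext_iff, mul_comm]

/-- The subgroup `V_ν = {(a, b, ν(a,b)⁻¹) | (a,b) ∈ V} ≤ A × B × C`. -/
def twistSub {A B C : Type*} [Group A] [Group B] [CommGroup C]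
    (V : Subgroup (A × B)) (ν : V →* C) : Subgroup (A × B × C) :=
  (twistHom V ν).range

/-- The `H × C`-orbit relation on `X × Y`, where `X = (G×H×C)/V_ν` and
`Y = (H×K×C)/U_μ`, via `(h,c)·(x,y) = ((1,h,c)x, (h,1,c⁻¹)y)`. -/
def orbRel {G H K C : Type*} [Group G] [Group H] [Group K] [CommGroup C]
    (V : Subgroup (G × H)) (U : Subgroup (H × K)) (ν : V →* C) (μ : U →* C) :
    (((G × H × C) ⧸ twistSub V ν) × ((H × K × C) ⧸ twistSub U μ)) →
    (((G × H × C) ⧸ twistSub V ν) × ((H × K × C) ⧸ twistSub U μ)) → Prop :=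
  fun p q => ∃ (h : H) (c : C),
    q = ((((1 : G), h, c) : G × H × C) • p.1, (((h, (1 : K), c⁻¹)) : H × K × C) • p.2)

/-! `c` fixes `w_h` exactly when some `(h', c') ∈ H × C` carries `(V_ν, (h,1,1)U_μ)` to
`((1,1,c)V_ν, (h,1,1)U_μ)`. On the first factor this means `(1, h', c'c⁻¹) ∈ V_ν`, i.e.
`c = c' ν(1,h')`; on the second, conjugating by `(h,1,1)`, it means `(h⁻¹h'h, 1, c'⁻¹) ∈ U_μ`,
i.e. `c' = μ(h⁻¹h'h, 1)`. -/

section Twist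

variable {A B C : Type*} [Group A] [Group B] [CommGroup C] (V : Subgroup (A × B)) (ν : V →* C)

lemma mem_twistSub {a : A} {b : B} {c : C} :
    (a, b, c) ∈ twistSub V ν ↔ ∃ hv : (a, b) ∈ V, c = (ν ⟨(a, b), hv⟩)⁻¹ := by
  constructor
  · rintro ⟨⟨v, hv⟩, hvabc⟩
    simp only [twistHom, MonoidHom.coe_mk, OneHom.coe_mk, Prod.mk.injEq] at hvabc
    obtain ⟨rfl, rfl, rfl⟩ := hvabc
    exact ⟨hv, rfl⟩
  · rintro ⟨hv, rfl⟩
    exact ⟨⟨(a, b), hv⟩, rfl⟩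

lemma smul_mk_one_twistSub_eq_iff (b : B) (c c' : C) :
    ((1, 1, c) : A × B × C) • (QuotientGroup.mk 1 : (A × B × C) ⧸ twistSub V ν) =
        ((1, b, c') : A × B × C) • QuotientGroup.mk 1 ↔
      ∃ hv : ((1 : A), b) ∈ V, c = c' * ν ⟨(1, b), hv⟩ := by
  rw [MulAction.Quotient.smul_mk, MulAction.Quotient.smul_mk, smul_eq_mul, smul_eq_mul,
    mul_one, mul_one, QuotientGroup.eq]
  simp only [Prod.inv_mk, Prod.mk_mul_mk, inv_one, one_mul, mem_twistSub,
    inv_mul_eq_iff_eq_mul, eq_mul_inv_iff_mul_eq]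
  exact exists_congr fun _ ↦ eq_comm

lemma mk_twistSub_eq_smul_mk_iff (a a' : A) (c : C) :
    (QuotientGroup.mk (a, 1, 1) : (A × B × C) ⧸ twistSub V ν) =
        ((a', 1, c) : A × B × C) • QuotientGroup.mk (a, 1, 1) ↔
      ∃ hv : (a⁻¹ * a' * a, (1 : B)) ∈ V, c = (ν ⟨(a⁻¹ * a' * a, 1), hv⟩)⁻¹ := by
  rw [MulAction.Quotient.smul_mk, smul_eq_mul, QuotientGroup.eq]
  simp only [Prod.inv_mk, Prod.mk_mul_mk, inv_one, one_mul, mul_one, mul_assoc, mem_twistSub]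

end Twist

section Orbits

variable {G H K C : Type*} [Group G] [Group H] [Group K] [CommGroup C]
  (V : Subgroup (G × H)) (U : Subgroup (H × K)) (ν : V →* C) (μ : U →* C)

lemma orbRel_equivalence : Equivalence (orbRel V U ν μ) where
  refl _ := ⟨1, 1, by simp [Prod.mk_one_one]⟩
  symm := by
    rintro _ _ ⟨h, c, rfl⟩
    exact ⟨h⁻¹, c⁻¹, by simp [smul_smul, Prod.mk_one_one]⟩
  trans := by
    rintro _ _ _ ⟨h, c, rfl⟩ ⟨h', c', rfl⟩
    exact ⟨h' * h, c' * c, by simp [smul_smul, mul_comm]⟩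

lemma quot_mk_eq_mk_iff_orbRel {p q} :
    Quot.mk (orbRel V U ν μ) p = Quot.mk (orbRel V U ν μ) q ↔ orbRel V U ν μ q p := by
  have hr := orbRel_equivalence V U ν μ
  rw [Quot.eq, hr.eqvGen_iff]
  exact ⟨hr.symm, hr.symm⟩

lemma quot_mk_smul_eq_quot_mk_iff (h : H) (c : C) :
    Quot.mk (orbRel V U ν μ)
        (((1 : G), (1 : H), c) • QuotientGroup.mk 1, QuotientGroup.mk (h, (1 : K), (1 : C))) =
      Quot.mk (orbRel V U ν μ) (QuotientGroup.mk 1, QuotientGroup.mk (h, (1 : K), (1 : C))) ↔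
    ∃ (h' : H) (hv : ((1 : G), h') ∈ V) (hu : (h⁻¹ * h' * h, (1 : K)) ∈ U),
      c = ν ⟨(1, h'), hv⟩ * μ ⟨(h⁻¹ * h' * h, 1), hu⟩ := by
  simp only [quot_mk_eq_mk_iff_orbRel, orbRel, Prod.mk.injEq, smul_mk_one_twistSub_eq_iff,
    mk_twistSub_eq_smul_mk_iff, inv_inj]
  constructor
  · rintro ⟨h', _, ⟨hv, rfl⟩, hu, rfl⟩
    exact ⟨h', hv, hu, mul_comm _ _⟩
  · rintro ⟨h', hv, hu, rfl⟩
    exact ⟨h', _, ⟨hv, mul_comm _ _⟩, hu, rfl⟩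

end Orbits

/-- For `w_h = [(V_ν, (h,1,1)U_μ)]` in the set `W` of `H × C`-orbits of
`X × Y`, the stabilizer of `w_h` under the `C`-action `c·[x,y] = [(1,1,c)x, y]`
is `{ν(1,h')·μ(h⁻¹h'h,1) | (1,h') ∈ V, (h⁻¹h'h,1) ∈ U}`; in particular `C`
acts freely at `w_h` iff all these products are trivial. -/
theorem stabilizer_of_orbit_eq_character_products
    {G H K C : Type*} [Group G] [Group H] [Group K] [CommGroup C]
    (V : Subgroup (G × H)) (U : Subgroup (H × K))
    (ν : V →* C) (μ : U →* C) (h : H) :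
    ({c : C |
        Quot.mk (orbRel V U ν μ)
          ((((1 : G), (1 : H), c) : G × H × C) • (QuotientGroup.mk 1),
            (QuotientGroup.mk ((h, (1 : K), (1 : C)) : H × K × C)))
        = Quot.mk (orbRel V U ν μ)
          ((QuotientGroup.mk 1),
            (QuotientGroup.mk ((h, (1 : K), (1 : C)) : H × K × C)))} =
      {c : C | ∃ (h' : H) (hv : ((1 : G), h') ∈ V) (hu : (h⁻¹ * h' * h, (1 : K)) ∈ U),
        c = ν ⟨(1, h'), hv⟩ * μ ⟨(h⁻¹ * h' * h, 1), hu⟩}) ∧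
    ((∀ c : C,
        Quot.mk (orbRel V U ν μ)
          ((((1 : G), (1 : H), c) : G × H × C) • (QuotientGroup.mk 1),
            (QuotientGroup.mk ((h, (1 : K), (1 : C)) : H × K × C)))
        = Quot.mk (orbRel V U ν μ)
          ((QuotientGroup.mk 1),
            (QuotientGroup.mk ((h, (1 : K), (1 : C)) : H × K × C))) → c = 1) ↔
      ∀ (h' : H) (hv : ((1 : G), h') ∈ V) (hu : (h⁻¹ * h' * h, (1 : K)) ∈ U),
        ν ⟨(1, h'), hv⟩ * μ ⟨(h⁻¹ * h' * h, 1), hu⟩ = 1) := by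
  refine ⟨Set.ext fun c ↦ quot_mk_smul_eq_quot_mk_iff V U ν μ h c, ?_⟩
  simp only [quot_mk_smul_eq_quot_mk_iff]
  constructor
  · intro hfree h' hv hu
    exact hfree _ ⟨h', hv, hu, rfl⟩
  · rintro htriv c ⟨h', hv, hu, rfl⟩
    exact htriv h' hv hu
end

section
/- Let p be a prime number and C a cyclic group of order p. Let G and H be finite groups of equal order, D ≤ G × H a subgroup with p₁(D) = G and p₂(D) = H, and δ : D → C a homomorphism such that: (g,1) ∈ D and δ(g,1) = 1 imply g = 1, and (1,h) ∈ D and δ(1,h) = 1 imply h = 1. Then G and H are isomorphic. -/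
/-- In a group of prime order, every nontrivial element generates. -/
private lemma exists_zpow_eq_aux {C : Type*} [Group C] {p : ℕ} (hp : p.Prime)
    (hC : Nat.card C = p) {x : C} (hx : x ≠ 1) (c : C) : ∃ n : ℤ, x ^ n = c := by
  have hfin : Finite C := Nat.finite_of_card_ne_zero (by rw [hC]; exact hp.pos.ne')
  have hord : orderOf x = p := by
    have hd := orderOf_dvd_natCard x
    rw [hC] at hd
    rcases (Nat.Prime.eq_one_or_self_of_dvd hp _ hd) with h | h
    · exact absurd (orderOf_eq_one_iff.mp h) hx
    · exact h
  have htop : Subgroup.zpowers x = ⊤ := by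
    apply Subgroup.eq_top_of_card_eq
    rw [Nat.card_zpowers, hord, hC]
  exact Subgroup.mem_zpowers_iff.mp (htop ▸ Subgroup.mem_top c)

private lemma of_bij_inj_aux {G H K : Type*} [Group G] [Group H] [Group K]
    [Finite G] [Finite H]
    (hcard : Nat.card G = Nat.card H) (f : K →* G) (g : K →* H)
    (hf : Function.Bijective f) (hg : Function.Injective g) : Nonempty (G ≃* H) := by
  let e := MulEquiv.ofBijective f hf
  have hinj : Function.Injective (g.comp e.symm.toMonoidHom) :=
    hg.comp e.symm.injective
  exact ⟨MulEquiv.ofBijective _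
    ((Nat.bijective_iff_injective_and_card _).2 ⟨hinj, hcard⟩)⟩

/-- Let `C` be cyclic of prime order, `G` and `H` finite groups of equal order,
`D ≤ G × H` with both projections surjective, and `δ : D → C` a homomorphism
with `k₁(D_δ)` and `k₂(D_δ)` trivial.  Then `G ≅ H`. -/
theorem iso_of_subcharacter_with_full_projections
    {p : ℕ} (hp : p.Prime) {C : Type*} [Group C] [IsCyclic C] (hC : Nat.card C = p)
    {G H : Type*} [Group G] [Group H] [Finite G] [Finite H]
    (hcard : Nat.card G = Nat.card H)
    (D : Subgroup (G × H))
    (hp1 : D.map (MonoidHom.fst G H) = ⊤)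
    (hp2 : D.map (MonoidHom.snd G H) = ⊤)
    (δ : D →* C)
    (hk1 : ∀ (g : G) (hm : (g, (1 : H)) ∈ D), δ ⟨(g, 1), hm⟩ = 1 → g = 1)
    (hk2 : ∀ (h : H) (hm : ((1 : G), h) ∈ D), δ ⟨(1, h), hm⟩ = 1 → h = 1) :
    Nonempty (G ≃* H) := by
  by_cases hN2 : ∀ h : H, ((1 : G), h) ∈ D → h = 1
  · by_cases hN1 : ∀ g : G, (g, (1 : H)) ∈ D → g = 1
    · -- both kernels trivial: D is the graph of an isomorphism
      refine of_bij_inj_aux hcard ((MonoidHom.fst G H).comp D.subtype)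
        ((MonoidHom.snd G H).comp D.subtype) ⟨?_, ?_⟩ ?_
      · rw [injective_iff_map_eq_one]
        rintro ⟨⟨g, h⟩, hmem⟩ hk
        simp only [MonoidHom.comp_apply, Subgroup.coe_subtype, MonoidHom.coe_fst] at hk
        subst hk
        have := hN2 h hmem
        subst this
        rfl
      · intro x
        have hx : x ∈ D.map (MonoidHom.fst G H) := by rw [hp1]; trivial
        obtain ⟨y, hy, hyx⟩ := hx
        exact ⟨⟨y, hy⟩, hyx⟩
      · rw [injective_iff_map_eq_one]
        rintro ⟨⟨g, h⟩, hmem⟩ hk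
        simp only [MonoidHom.comp_apply, Subgroup.coe_subtype, MonoidHom.coe_snd] at hk
        subst hk
        have := hN1 g hmem
        subst this
        rfl
    · -- second case: there is a nontrivial (g₀, 1) ∈ D; produce H ≅ G
      push_neg at hN1
      obtain ⟨g₀, hmem₀, hne₀⟩ := hN1
      set d₀ : D := ⟨(g₀, (1 : H)), hmem₀⟩ with hd₀
      have hc₀ : δ d₀ ≠ 1 := fun h => hne₀ (hk1 g₀ hmem₀ h)
      have key : Nonempty (H ≃* G) := by
        refine of_bij_inj_aux hcard.symm
          ((MonoidHom.snd G H).comp (D.subtype.comp δ.ker.subtype))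
          ((MonoidHom.fst G H).comp (D.subtype.comp δ.ker.subtype)) ⟨?_, ?_⟩ ?_
        · rw [injective_iff_map_eq_one]
          rintro ⟨⟨⟨g, h⟩, hmem⟩, hker⟩ hk
          simp only [MonoidHom.comp_apply, Subgroup.coe_subtype, MonoidHom.coe_snd] at hk
          subst hk
          rw [MonoidHom.mem_ker] at hker
          have := hk1 g hmem hker
          subst this
          rfl
        · intro x
          have hx : x ∈ D.map (MonoidHom.snd G H) := by rw [hp2]; trivial
          obtain ⟨y, hy, hyx⟩ := hx
          set d : D := ⟨y, hy⟩ with hd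
          obtain ⟨n, hn⟩ := exists_zpow_eq_aux hp hC hc₀ (δ d)
          refine ⟨⟨d * d₀ ^ (-n), ?_⟩, ?_⟩
          · rw [MonoidHom.mem_ker, map_mul, map_zpow, zpow_neg, hn, mul_inv_cancel]
          · show ((d * d₀ ^ (-n) : D) : G × H).2 = x
            push_cast
            simp [hd, hd₀]
            exact hyx
        · rw [injective_iff_map_eq_one]
          rintro ⟨⟨⟨g, h⟩, hmem⟩, hker⟩ hk
          simp only [MonoidHom.comp_apply, Subgroup.coe_subtype, MonoidHom.coe_fst] at hk
          subst hk
          rw [MonoidHom.mem_ker] at hker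
          have := hk2 h hmem hker
          subst this
          rfl
      obtain ⟨e⟩ := key
      exact ⟨e.symm⟩
  · -- there is a nontrivial (1, h₀) ∈ D
    push_neg at hN2
    obtain ⟨h₀, hmem₀, hne₀⟩ := hN2
    set d₀ : D := ⟨((1 : G), h₀), hmem₀⟩ with hd₀
    have hc₀ : δ d₀ ≠ 1 := fun h => hne₀ (hk2 h₀ hmem₀ h)
    refine of_bij_inj_aux hcard
      ((MonoidHom.fst G H).comp (D.subtype.comp δ.ker.subtype))
      ((MonoidHom.snd G H).comp (D.subtype.comp δ.ker.subtype)) ⟨?_, ?_⟩ ?_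
    · rw [injective_iff_map_eq_one]
      rintro ⟨⟨⟨g, h⟩, hmem⟩, hker⟩ hk
      simp only [MonoidHom.comp_apply, Subgroup.coe_subtype, MonoidHom.coe_fst] at hk
      subst hk
      rw [MonoidHom.mem_ker] at hker
      have := hk2 h hmem hker
      subst this
      rfl
    · intro x
      have hx : x ∈ D.map (MonoidHom.fst G H) := by rw [hp1]; trivial
      obtain ⟨y, hy, hyx⟩ := hx
      set d : D := ⟨y, hy⟩ with hd
      obtain ⟨n, hn⟩ := exists_zpow_eq_aux hp hC hc₀ (δ d)
      refine ⟨⟨d * d₀ ^ (-n), ?_⟩, ?_⟩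
      · rw [MonoidHom.mem_ker, map_mul, map_zpow, zpow_neg, hn, mul_inv_cancel]
      · show ((d * d₀ ^ (-n) : D) : G × H).1 = x
        push_cast
        simp [hd, hd₀]
        exact hyx
    · rw [injective_iff_map_eq_one]
      rintro ⟨⟨⟨g, h⟩, hmem⟩, hker⟩ hk
      simp only [MonoidHom.comp_apply, Subgroup.coe_subtype, MonoidHom.coe_snd] at hk
      subst hk
      rw [MonoidHom.mem_ker] at hker
      have := hk1 g hmem hker
      subst this
      rfl
end
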